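/- arXiv:1811.12360 — 2 statements merged into one kernel-verified Lean document; each statement's English description precedes it below -/
import Mathlib

section
/- Let G be a connected finite simple graph with at least 3 vertices and C ⊆ V(G) with no isolated vertex of G in V(G) ∖ C. If (G;C) is a clutter, then |N⟨u⟩| ≥ 2 for every u ∈ V(G). -/
namespace LegalSeq

variable {V : Type*}

/-- The generalized neighborhood `N⟨v⟩`: the closed neighborhood of `v` if `v ∈ C`,
the open neighborhood otherwise. -/
noncomputable def gN [Fintype V] (G : SimpleGraph V) (C : Set V) (v : V) : Finset V := by
  classical
  exact (Set.toFinite (if v ∈ C then insert v (G.neighborSet v) else G.neighborSet v)).toFinset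

/-- The instance `(G;C)` is a clutter if `u ◁ v` (i.e. `N⟨v⟩ ∖ N⟨u⟩ ≠ ∅`) for all pairs of
distinct vertices `u, v`. -/
def IsClutter [Fintype V] (G : SimpleGraph V) (C : Set V) : Prop :=
  ∀ u v : V, u ≠ v → ¬ (gN G C v ⊆ gN G C u)

lemma mem_gN [Fintype V] {G : SimpleGraph V} {C : Set V} {u w : V} :
    w ∈ gN G C u ↔ (G.Adj u w ∨ (u ∈ C ∧ w = u)) := by
  classical
  simp only [gN, Set.Finite.mem_toFinset]
  split_ifs with h <;>
    simp [SimpleGraph.mem_neighborSet, h] <;> tauto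

/-- If `G` is connected with at least 3 vertices, no vertex outside `C` is
isolated, and `(G;C)` is a clutter, then `|N⟨u⟩| ≥ 2` for every vertex `u`. -/
theorem clutter_nbr_card [Fintype V] (G : SimpleGraph V) (C : Set V)
    (hconn : G.Connected) (hcard : 3 ≤ Fintype.card V)
    (hiso : ∀ w : V, w ∉ C → ∃ z, G.Adj w z)
    (hclutter : IsClutter G C) :
    ∀ u : V, 2 ≤ (gN G C u).card := by
  classical
  intro u
  have hadj : ∀ a : V, ∃ b, G.Adj a b := by
    intro a
    obtain ⟨b, hb⟩ := Fintype.exists_ne_of_one_lt_card (by omega) a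
    obtain ⟨p⟩ := hconn.preconnected a b
    cases p with
    | nil => exact absurd rfl hb
    | cons h q => exact ⟨_, h⟩
  by_contra hlt
  push_neg at hlt
  have hle : ∀ x ∈ gN G C u, ∀ y ∈ gN G C u, x = y :=
    Finset.card_le_one.mp (by omega)
  obtain ⟨v, hv⟩ := hadj u
  by_cases hu : u ∈ C
  · have h1 : u ∈ gN G C u := mem_gN.mpr (Or.inr ⟨hu, rfl⟩)
    have h2 : v ∈ gN G C u := mem_gN.mpr (Or.inl hv)
    exact hv.ne (hle u h1 v h2)
  · have hgu : ∀ w, w ∈ gN G C u ↔ G.Adj u w := by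
      intro w; rw [mem_gN]; simp [hu]
    have h2 : v ∈ gN G C u := (hgu v).mpr hv
    have hNu : ∀ w, G.Adj u w → w = v := fun w hw => hle w ((hgu w).mpr hw) v h2
    by_cases hex : ∃ w, G.Adj v w ∧ w ≠ u
    · obtain ⟨w, hw, hwu⟩ := hex
      apply hclutter w u hwu
      intro x hx
      have hxv : x = v := hle x hx v h2
      subst hxv
      exact mem_gN.mpr (Or.inl hw.symm)
    · push_neg at hex
      have hx3 : ∃ x : V, x ≠ u ∧ x ≠ v := by
        by_contra hx
        push_neg at hx
        have hsub : (Finset.univ : Finset V) ⊆ {u, v} := by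
          intro x _
          rcases eq_or_ne x u with h | h
          · simp [h]
          · simp [hx x h]
        have := Finset.card_le_card hsub
        have h2' : ({u, v} : Finset V).card ≤ 2 :=
          (Finset.card_insert_le _ _).trans (by simp)
        simp only [Finset.card_univ] at this
        omega
      obtain ⟨x, hxu, hxv⟩ := hx3
      obtain ⟨p⟩ := hconn.preconnected u x
      have hwalk : ∀ (a b : V), G.Walk a b → (a = u ∨ a = v) → (b = u ∨ b = v) := by
        intro a b p
        induction p with
        | nil => exact id
        | cons h q ih =>
          intro ha
          rcases ha with rfl | rfl
          · exact ih (Or.inr (hNu _ h))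
          · exact ih (Or.inl (hex _ h))
      rcases hwalk u x p (Or.inl rfl) with h | h
      · exact hxu h
      · exact hxv h

end LegalSeq
end

section
/- Assume G is connected, n ≥ 3, and (G;C) is twin free. Let t ≥ 1 and W = {w₁,…,w_t} ⊆ V satisfy N⟨w_j⟩ ⊆ N⟨w₁⟩ for all j = 2,…,t, and let i ∈ {1,…,m−1}. Then the (valid) inequality Σ_{w∈W} y_{w,i+1} ≤ Σ_{u∈N⟨w₁⟩} (x_{u,i} − x_{u,i+1}) is facet-defining for P if and only if every v ∈ V ∖ W satisfies w₁ ◁ v (i.e., W is maximal with respect to the property N⟨·⟩ ⊆ N⟨w₁⟩). -/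
/-!
The face `F` of the inequality `f ≤ 0` contains `0`, so its affine span is the linear span of `F`,
which lies in `ker f`. Write `d` for the unit vector of `y_{w₁,i+1}`, so `f d = 1`.

If `W` is maximal, `z - f z • d ∈ span F` for every `z`, hence `span F = ker f` has dimension
`2nm - 1`. It suffices to check this on a spanning family of feasible points: the staircases
`xPt u t` (`x_{u,j} = 1` for `j < t`) and `yPt v j u = xPt u j + e_y(v,j)` with `u ∈ N⟨v⟩`.
A staircase off `F` becomes `yPt w₁ (i+1) u ∈ F` after adding `d`, and for each `(v, j)` some
`u ∈ N⟨v⟩` puts `yPt v j u` on `F`; for `j = i+1` and `v ∉ W` this `u ∈ N⟨v⟩ ∖ N⟨w₁⟩` is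
exactly what maximality provides.

If instead `v ∉ W` has `N⟨v⟩ ⊆ N⟨w₁⟩`, the inequality for `W ∪ {v}` is valid as well; with
`y ≥ 0` it forces `y_{v,i+1} = 0` on `F`, while `e_y(v,i+1) ∈ ker f`, so `span F < ker f`.
-/

open Finset

namespace LegalSeq

variable {V : Type*}

/-- The ambient space `ℝ^{V×{1,…,m}} × ℝ^{V×{1,…,m}}` of the polytope of legal sequences. -/
abbrev Pt (V : Type*) (m : ℕ) := (V × Fin m → ℝ) × (V × Fin m → ℝ)

/-- Feasible 0/1 pairs `(x, y)` of the formulation `F₁` (constraints (1)-(5)). -/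
def Feasible [Fintype V] (G : SimpleGraph V) (C : Set V) (m : ℕ) : Set (Pt V m) :=
  { p | (∀ q, p.1 q = 0 ∨ p.1 q = 1) ∧ (∀ q, p.2 q = 0 ∨ p.2 q = 1) ∧
    (∀ i : Fin m, ∑ v : V, p.2 (v, i) ≤ 1) ∧
    (∀ v : V, ∑ i : Fin m, p.2 (v, i) ≤ 1) ∧
    (∀ (v : V) (i : Fin m) (h : i.1 + 1 < m),
        p.2 (v, ⟨i.1 + 1, h⟩) ≤ ∑ u ∈ gN G C v, (p.1 (u, i) - p.1 (u, ⟨i.1 + 1, h⟩))) ∧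
    (∀ (u : V) (i : Fin m), p.1 (u, i) + ∑ v ∈ gN G C u, p.2 (v, i) ≤ 1) ∧
    (∀ (u : V) (i : Fin m) (h : i.1 + 1 < m), p.1 (u, ⟨i.1 + 1, h⟩) ≤ p.1 (u, i)) }

/-- The polytope of legal sequences: the convex hull of the feasible 0/1 pairs. -/
noncomputable def poly [Fintype V] (G : SimpleGraph V) (C : Set V) (m : ℕ) : Set (Pt V m) :=
  convexHull ℝ (Feasible G C m)

/-- `δ(G;C)`, the minimum cardinality of a generalized neighborhood. -/
noncomputable def gdelta [Fintype V] (G : SimpleGraph V) (C : Set V) : ℕ :=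
  sInf (Set.range fun v : V => (gN G C v).card)

/-- The instance `(G;C)` is twin free if distinct vertices have distinct
generalized neighborhoods. -/
def TwinFree [Fintype V] (G : SimpleGraph V) (C : Set V) : Prop :=
  ∀ u v : V, u ≠ v → gN G C u ≠ gN G C v

/-- The inequality `f p ≤ a` is valid for the polytope and the face it defines has affine
dimension `2nm - 1`, i.e. it is facet-defining. -/
def IsFacet [Fintype V] (G : SimpleGraph V) (C : Set V) (m : ℕ)
    (f : Pt V m → ℝ) (a : ℝ) : Prop :=
  (∀ p ∈ poly G C m, f p ≤ a) ∧
  Module.finrank ℝ ((affineSpan ℝ {p ∈ poly G C m | f p = a}).direction) =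
    2 * Fintype.card V * m - 1

theorem _root_.LinearMap.ker_le_of_forall_sub_smul_mem {R M : Type*} [CommRing R] [AddCommGroup M]
    [Module R M] {f : M →ₗ[R] R} {d : M} {S : Submodule R M} {B : Set M}
    (hB : Submodule.span R B = ⊤) (hBS : ∀ b ∈ B, b - f b • d ∈ S) :
    LinearMap.ker f ≤ S := by
  set π : M →ₗ[R] M := LinearMap.id - (LinearMap.toSpanSingleton R M d) ∘ₗ f
  have hπ : ⊤ ≤ S.comap π := hB ▸ Submodule.span_le.2 fun b hb => by simpa [π] using hBS b hb
  intro z hz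
  simpa [π, LinearMap.mem_ker.1 hz] using hπ (Submodule.mem_top : z ∈ ⊤)

theorem _root_.direction_affineSpan_eq_span_of_zero_mem {K M : Type*} [Ring K]
    [AddCommGroup M] [Module K M] {s : Set M} (hs : 0 ∈ s) :
    (affineSpan K s).direction = Submodule.span K s := by
  rw [direction_affineSpan, vectorSpan_eq_span_vsub_set_right K hs]
  simp

section Points

variable [DecidableEq V] {m : ℕ}

def xInd (u : V) (t : ℕ) : V × Fin m → ℝ :=
  fun q => if q.1 = u ∧ (q.2 : ℕ) < t then 1 else 0

def xPt (u : V) (t : ℕ) : Pt V m := (xInd u t, 0)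

def yPt (v : V) (j : Fin m) (u : V) : Pt V m := (xInd u j, Pi.single (v, j) 1)

lemma xInd_eq_zero_or_one (u : V) (t : ℕ) (q : V × Fin m) :
    xInd u t q = 0 ∨ xInd u t q = 1 := by
  unfold xInd; split_ifs <;> simp

lemma xInd_sub_succ (u : V) (t : ℕ) (u' : V) (i : Fin m) (h : i.1 + 1 < m) :
    xInd u t (u', i) - xInd u t (u', ⟨i.1 + 1, h⟩) = if u' = u ∧ t = i.1 + 1 then 1 else 0 := by
  unfold xInd
  by_cases hu : u' = u <;> simp only [hu, true_and, false_and, if_false, sub_zero]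
  split_ifs <;> first | omega | norm_num

lemma xInd_succ_le (u : V) (t : ℕ) (u' : V) (i : Fin m) (h : i.1 + 1 < m) :
    xInd u t (u', ⟨i.1 + 1, h⟩) ≤ xInd u t (u', i) := by
  have := xInd_sub_succ u t u' i h
  split_ifs at this <;> linarith

lemma sum_xInd_sub_succ (N : Finset V) (u : V) (t : ℕ) (i : Fin m) (h : i.1 + 1 < m) :
    ∑ u' ∈ N, (xInd u t (u', i) - xInd u t (u', ⟨i.1 + 1, h⟩)) =
      if u ∈ N ∧ t = i.1 + 1 then 1 else 0 := by
  simp only [xInd_sub_succ, ite_and, Finset.sum_ite_eq']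

lemma xPt_succ_sub_xPt (u : V) (j : Fin m) :
    xPt u (j.1 + 1) - xPt u j = ((Pi.single (u, j) 1 : V × Fin m → ℝ), 0) := by
  refine Prod.ext ?_ (by simp [xPt])
  funext ⟨u', j'⟩
  simp only [xPt, Prod.fst_sub, Pi.sub_apply, xInd, Pi.single_apply, Prod.mk.injEq, Fin.ext_iff]
  by_cases hu : u' = u <;> simp only [hu, true_and, false_and, if_false, sub_zero]
  split_ifs <;> first | omega | norm_num

lemma yPt_sub_xPt (v : V) (j : Fin m) (u : V) :
    yPt v j u - xPt u j = ((0 : V × Fin m → ℝ), Pi.single (v, j) 1) := by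
  simp [yPt, xPt]

variable [Fintype V] {G : SimpleGraph V} {C : Set V}

lemma xPt_mem_feasible (u : V) (t : ℕ) : xPt u t ∈ Feasible G C m := by
  refine ⟨xInd_eq_zero_or_one u t, fun _ => Or.inl rfl, fun _ => by simp [xPt],
    fun _ => by simp [xPt], fun v i h => ?_, fun u' i => ?_, xInd_succ_le u t⟩
  · simp only [xPt, Pi.zero_apply, sum_xInd_sub_succ]
    split_ifs <;> norm_num
  · rcases xInd_eq_zero_or_one u t (u', i) with hx | hx <;> simp [xPt, hx]

lemma yPt_mem_feasible {v u : V} (hu : u ∈ gN G C v) (j : Fin m) :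
    yPt v j u ∈ Feasible G C m := by
  refine ⟨xInd_eq_zero_or_one u j, fun q => ?_, fun i => ?_, fun v' => ?_, fun v' i h => ?_,
    fun u' i => ?_, xInd_succ_le u j⟩
  · simp only [yPt, Pi.single_apply]; split_ifs <;> simp
  · simp only [yPt, Pi.single_apply, Prod.mk.injEq, ite_and, Finset.sum_ite_eq',
      Finset.mem_univ, if_true]
    split_ifs <;> norm_num
  · simp only [yPt, Pi.single_apply, Prod.mk.injEq, ite_and]
    split_ifs <;> simp
  · simp only [yPt, sum_xInd_sub_succ, Pi.single_apply]
    split_ifs with hvj hcond <;> try norm_num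
    obtain ⟨rfl, rfl⟩ := Prod.mk.inj hvj
    exact hcond ⟨hu, rfl⟩
  · simp only [yPt, Pi.single_apply, Prod.mk.injEq, ite_and, Finset.sum_ite_eq']
    by_cases hij : i = j
    · subst hij
      have hx : xInd u i (u', i) = 0 := by simp [xInd]
      rw [hx]
      split_ifs <;> norm_num
    · rcases xInd_eq_zero_or_one u j (u', i) with hx | hx <;> simp [hx, hij]

lemma span_xPt_union_yPt_eq_top (c : V → Fin m → V) :
    Submodule.span ℝ (Set.range (fun ut : V × ℕ => (xPt ut.1 ut.2 : Pt V m)) ∪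
      Set.range (fun vj : V × Fin m => yPt vj.1 vj.2 (c vj.1 vj.2))) = ⊤ := by
  set B := Set.range (fun ut : V × ℕ => (xPt ut.1 ut.2 : Pt V m)) ∪
    Set.range (fun vj : V × Fin m => yPt vj.1 vj.2 (c vj.1 vj.2))
  have hx (u : V) (t : ℕ) : xPt u t ∈ Submodule.span ℝ B :=
    Submodule.subset_span (Or.inl ⟨(u, t), rfl⟩)
  rw [eq_top_iff, ← ((Pi.basisFun ℝ (V × Fin m)).prod (Pi.basisFun ℝ (V × Fin m))).span_eq,
    Submodule.span_le]
  rintro _ ⟨⟨u, j⟩ | ⟨v, j⟩, rfl⟩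
  · simpa [← xPt_succ_sub_xPt] using sub_mem (hx u (j.1 + 1)) (hx u j)
  · have hy : yPt v j (c v j) ∈ Submodule.span ℝ B :=
      Submodule.subset_span (Or.inr ⟨(v, j), rfl⟩)
    simpa [← yPt_sub_xPt v j (c v j)] using sub_mem hy (hx (c v j) j)

end Points

section NestedIneq

variable {m : ℕ}

def nestedIneq (W N : Finset V) (i : Fin m) (h : i.1 + 1 < m) : Pt V m →ₗ[ℝ] ℝ where
  toFun p := (∑ w ∈ W, p.2 (w, ⟨i.1 + 1, h⟩)) - ∑ u ∈ N, (p.1 (u, i) - p.1 (u, ⟨i.1 + 1, h⟩))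
  map_add' p q := by
    simp only [Prod.fst_add, Prod.snd_add, Pi.add_apply, Finset.sum_add_distrib,
      Finset.sum_sub_distrib]
    ring
  map_smul' c p := by
    simp only [Prod.smul_fst, Prod.smul_snd, Pi.smul_apply, smul_eq_mul, RingHom.id_apply,
      ← Finset.mul_sum, ← mul_sub]

lemma nestedIneq_apply (W N : Finset V) (i : Fin m) (h : i.1 + 1 < m) (p : Pt V m) :
    nestedIneq W N i h p =
      (∑ w ∈ W, p.2 (w, ⟨i.1 + 1, h⟩)) - ∑ u ∈ N, (p.1 (u, i) - p.1 (u, ⟨i.1 + 1, h⟩)) :=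
  rfl

variable [DecidableEq V] {W N : Finset V} {i : Fin m} {h : i.1 + 1 < m}

lemma nestedIneq_xPt (u : V) (t : ℕ) :
    nestedIneq W N i h (xPt u t) = -(if u ∈ N ∧ t = i.1 + 1 then 1 else 0) := by
  simp only [nestedIneq_apply, xPt, Pi.zero_apply, Finset.sum_const_zero, zero_sub,
    sum_xInd_sub_succ]

lemma nestedIneq_single_snd (v : V) (j : Fin m) :
    nestedIneq W N i h ((0 : V × Fin m → ℝ), Pi.single (v, j) 1) =
      if v ∈ W ∧ ⟨i.1 + 1, h⟩ = j then 1 else 0 := by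
  simp only [nestedIneq_apply, Pi.zero_apply, sub_self, Finset.sum_const_zero, sub_zero,
    Pi.single_apply, Prod.mk.injEq, ite_and, Finset.sum_ite_eq']

lemma nestedIneq_yPt (v : V) (j : Fin m) (u : V) :
    nestedIneq W N i h (yPt v j u) =
      (if v ∈ W ∧ ⟨i.1 + 1, h⟩ = j then 1 else 0) - (if u ∈ N ∧ j.1 = i.1 + 1 then 1 else 0) := by
  rw [← sub_add_cancel (yPt v j u) (xPt u j), yPt_sub_xPt, map_add, nestedIneq_single_snd,
    nestedIneq_xPt]
  ring

lemma nestedIneq_insert {v : V} (hv : v ∉ W) (p : Pt V m) :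
    nestedIneq (insert v W) N i h p = nestedIneq W N i h p + p.2 (v, ⟨i.1 + 1, h⟩) := by
  rw [nestedIneq_apply, nestedIneq_apply, Finset.sum_insert hv]
  ring

end NestedIneq

section Face

variable [Fintype V] {G : SimpleGraph V} {C : Set V} {m : ℕ} {W N : Finset V} {i : Fin m}
  {h : i.1 + 1 < m}

lemma gN_nonempty (hiso : ∀ w : V, w ∉ C → ∃ z, G.Adj w z) (v : V) : (gN G C v).Nonempty := by
  by_cases hv : v ∈ C
  · exact ⟨v, by simp [gN, hv]⟩
  · obtain ⟨z, hz⟩ := hiso v hv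
    exact ⟨z, by simp [gN, hv, hz]⟩

lemma zero_mem_feasible : (0 : Pt V m) ∈ Feasible G C m :=
  ⟨fun _ => Or.inl rfl, fun _ => Or.inl rfl, by simp, by simp, by simp, by simp, by simp⟩

lemma nestedIneq_nonpos_of_mem_feasible (hW : ∀ w ∈ W, gN G C w ⊆ N) {p : Pt V m}
    (hp : p ∈ Feasible G C m) : nestedIneq W N i h p ≤ 0 := by
  obtain ⟨-, hy01, hcol, -, hstep, -, hmono⟩ := hp
  set i' : Fin m := ⟨i.1 + 1, h⟩
  have hdiff (u : V) : 0 ≤ p.1 (u, i) - p.1 (u, i') := sub_nonneg.2 (hmono u i h)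
  rw [nestedIneq_apply, sub_nonpos]
  by_cases hzero : ∀ w ∈ W, p.2 (w, i') = 0
  · rw [Finset.sum_eq_zero hzero]
    exact Finset.sum_nonneg fun u _ => hdiff u
  push Not at hzero
  obtain ⟨w, hw, hyw⟩ := hzero
  have hy_nonneg (q : V × Fin m) : 0 ≤ p.2 q := by rcases hy01 q with hq | hq <;> simp [hq]
  calc ∑ w ∈ W, p.2 (w, i') ≤ ∑ v, p.2 (v, i') :=
        Finset.sum_le_sum_of_subset_of_nonneg W.subset_univ fun v _ _ => hy_nonneg _
    _ ≤ 1 := hcol i'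
    _ = p.2 (w, i') := ((hy01 _).resolve_left hyw).symm
    _ ≤ ∑ u ∈ gN G C w, (p.1 (u, i) - p.1 (u, i')) := hstep w i h
    _ ≤ ∑ u ∈ N, (p.1 (u, i) - p.1 (u, i')) :=
        Finset.sum_le_sum_of_subset_of_nonneg (hW w hw) fun u _ _ => hdiff u

lemma nestedIneq_nonpos_of_mem_poly (hW : ∀ w ∈ W, gN G C w ⊆ N) {p : Pt V m}
    (hp : p ∈ poly G C m) : nestedIneq W N i h p ≤ 0 :=
  convexHull_min (fun _ hq => nestedIneq_nonpos_of_mem_feasible hW hq)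
    (convex_halfSpace_le (nestedIneq W N i h).isLinear 0) hp

lemma snd_nonneg_of_mem_poly {p : Pt V m} (hp : p ∈ poly G C m) (q : V × Fin m) : 0 ≤ p.2 q :=
  convexHull_min (t := {p : Pt V m | 0 ≤ p.2 q})
    (fun r hr => by rcases hr.2.1 q with hq | hq <;> simp [hq])
    (convex_halfSpace_ge (⟨fun _ _ => rfl, fun _ _ => rfl⟩ : IsLinearMap ℝ fun p : Pt V m => p.2 q)
      0) hp

variable (G C m) in
def face (f : Pt V m → ℝ) : Set (Pt V m) := {p ∈ poly G C m | f p = 0}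

lemma zero_mem_face (f : Pt V m →ₗ[ℝ] ℝ) : (0 : Pt V m) ∈ face G C m f :=
  ⟨subset_convexHull ℝ _ zero_mem_feasible, map_zero f⟩

lemma span_face_le_ker (f : Pt V m →ₗ[ℝ] ℝ) :
    Submodule.span ℝ (face G C m f) ≤ LinearMap.ker f :=
  Submodule.span_le.2 fun _ hp => hp.2

lemma span_face_lt_ker (hW : ∀ w ∈ W, gN G C w ⊆ N) {v : V} (hv : v ∉ W) (hvN : gN G C v ⊆ N) :
    Submodule.span ℝ (face G C m (nestedIneq W N i h)) < LinearMap.ker (nestedIneq W N i h) := by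
  classical
  set i' : Fin m := ⟨i.1 + 1, h⟩
  have hface : Submodule.span ℝ (face G C m (nestedIneq W N i h)) ≤
      LinearMap.ker (LinearMap.proj (v, i') ∘ₗ LinearMap.snd ℝ _ _) := by
    refine Submodule.span_le.2 ?_
    rintro p ⟨hp, hfp⟩
    have hvalid := nestedIneq_nonpos_of_mem_poly (i := i) (h := h)
      (Finset.forall_mem_insert _ _ _ |>.2 ⟨hvN, hW⟩) hp
    rw [nestedIneq_insert hv, hfp] at hvalid
    have hy := snd_nonneg_of_mem_poly hp (v, i')
    simp only [SetLike.mem_coe, LinearMap.mem_ker, LinearMap.coe_comp, Function.comp_apply,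
      LinearMap.snd_apply, LinearMap.proj_apply]
    linarith
  refine SetLike.lt_iff_le_and_exists.2 ⟨span_face_le_ker _,
    ((0 : V × Fin m → ℝ), Pi.single (v, i') 1), ?_, fun hmem => ?_⟩
  · simp [nestedIneq_single_snd, hv]
  · simpa using hface hmem

lemma exists_yPt_mem_face [DecidableEq V] (hiso : ∀ w : V, w ∉ C → ∃ z, G.Adj w z)
    (hW : ∀ w ∈ W, gN G C w ⊆ N) (hmax : ∀ v ∉ W, ¬ gN G C v ⊆ N) (v : V) (j : Fin m) :
    ∃ u ∈ gN G C v, nestedIneq W N i h (yPt v j u) = 0 := by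
  by_cases hj : (⟨i.1 + 1, h⟩ : Fin m) = j
  · subst hj
    by_cases hvW : v ∈ W
    · obtain ⟨u, hu⟩ := gN_nonempty hiso v
      exact ⟨u, hu, by simp [nestedIneq_yPt, hvW, hW v hvW hu]⟩
    · obtain ⟨u, hu, huN⟩ := Finset.not_subset.1 (hmax v hvW)
      exact ⟨u, hu, by simp [nestedIneq_yPt, hvW, huN]⟩
  · obtain ⟨u, hu⟩ := gN_nonempty hiso v
    have hj' : j.1 ≠ i.1 + 1 := fun h' => hj (Fin.ext h'.symm)
    exact ⟨u, hu, by simp [nestedIneq_yPt, hj, hj']⟩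

lemma span_face_eq_ker (hiso : ∀ w : V, w ∉ C → ∃ z, G.Adj w z) {w1 : V} (hw1 : w1 ∈ W)
    (hW : ∀ w ∈ W, gN G C w ⊆ gN G C w1) (hmax : ∀ v ∉ W, ¬ gN G C v ⊆ gN G C w1) :
    Submodule.span ℝ (face G C m (nestedIneq W (gN G C w1) i h)) =
      LinearMap.ker (nestedIneq W (gN G C w1) i h) := by
  classical
  have hF (p : Pt V m) (hp : p ∈ Feasible G C m) (hfp : nestedIneq W (gN G C w1) i h p = 0) :
      p ∈ Submodule.span ℝ (face G C m (nestedIneq W (gN G C w1) i h)) :=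
    Submodule.subset_span ⟨subset_convexHull ℝ _ hp, hfp⟩
  choose c hc hcf using exists_yPt_mem_face (i := i) (h := h) hiso hW hmax
  refine le_antisymm (span_face_le_ker _) (LinearMap.ker_le_of_forall_sub_smul_mem
    (d := ((0 : V × Fin m → ℝ), Pi.single (w1, ⟨i.1 + 1, h⟩) 1))
    (span_xPt_union_yPt_eq_top c) ?_)
  rintro _ (⟨⟨u, t⟩, rfl⟩ | ⟨⟨v, j⟩, rfl⟩)
  · by_cases hut : u ∈ gN G C w1 ∧ t = i.1 + 1
    · obtain ⟨hu, rfl⟩ := hut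
      rw [nestedIneq_xPt, if_pos ⟨hu, rfl⟩, neg_smul, one_smul, sub_neg_eq_add,
        show xPt u (i.1 + 1) + _ = yPt w1 ⟨i.1 + 1, h⟩ u by simp [xPt, yPt]]
      exact hF _ (yPt_mem_feasible hu _) (by simp [nestedIneq_yPt, hw1, hu])
    · simpa [nestedIneq_xPt, hut] using
        hF _ (xPt_mem_feasible u t) (by simp [nestedIneq_xPt, hut])
  · simpa [hcf v j] using hF _ (yPt_mem_feasible (hc v j) j) (hcf v j)

lemma finrank_ker_nestedIneq (hW : W.Nonempty) :
    Module.finrank ℝ (LinearMap.ker (nestedIneq W N i h)) = 2 * Fintype.card V * m - 1 := by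
  classical
  obtain ⟨w, hw⟩ := hW
  have hne : nestedIneq W N i h ≠ 0 := fun h0 => by
    simpa [h0, hw] using nestedIneq_single_snd (W := W) (N := N) (h := h) w ⟨i.1 + 1, h⟩
  have hdim : Module.finrank ℝ (Pt V m) = 2 * Fintype.card V * m := by
    rw [Module.finrank_prod, Module.finrank_fintype_fun_eq_card, Fintype.card_prod,
      Fintype.card_fin]
    ring
  have := Module.Dual.finrank_ker_add_one_of_ne_zero hne
  omega

end Face

theorem nested_ineq_facet_iff_general [Fintype V] (G : SimpleGraph V) (C : Set V)
    (hiso : ∀ w : V, w ∉ C → ∃ z, G.Adj w z)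
    (m : ℕ)
    (W : Finset V) (w1 : V) (hw1 : w1 ∈ W)
    (hW : ∀ w ∈ W, gN G C w ⊆ gN G C w1)
    (i : Fin m) (h : i.1 + 1 < m) :
    IsFacet G C m
      (fun p => (∑ w ∈ W, p.2 (w, ⟨i.1 + 1, h⟩)) -
        ∑ u ∈ gN G C w1, (p.1 (u, i) - p.1 (u, ⟨i.1 + 1, h⟩))) 0 ↔
    ∀ v : V, v ∉ W → ¬ (gN G C v ⊆ gN G C w1) := by
  change IsFacet G C m (nestedIneq W (gN G C w1) i h) 0 ↔ _
  rw [IsFacet, ← face, direction_affineSpan_eq_span_of_zero_mem (zero_mem_face _),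
    ← finrank_ker_nestedIneq ⟨w1, hw1⟩]
  constructor
  · rintro ⟨-, hdim⟩ v hv hvN
    exact (Submodule.finrank_lt_finrank_of_lt (span_face_lt_ker hW hv hvN)).ne hdim
  · intro hmax
    exact ⟨fun p hp => nestedIneq_nonpos_of_mem_poly hW hp,
      by rw [span_face_eq_ker hiso hw1 hW hmax]⟩

/-- Under the hypotheses of Statement 14 and with `G` connected, `n ≥ 3`,
`(G;C)` twin free: the valid inequality
`Σ_{w∈W} y_{w,i+1} ≤ Σ_{u∈N⟨w₁⟩} (x_{u,i} − x_{u,i+1})` is facet-defining for `P` iff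
every `v ∉ W` satisfies `w₁ ◁ v` (i.e. `N⟨v⟩ ⊄ N⟨w₁⟩`), that is, `W` is maximal. -/
theorem nested_ineq_facet_iff [Fintype V] (G : SimpleGraph V) (C : Set V)
    (hconn : G.Connected) (hcard : 3 ≤ Fintype.card V)
    (hiso : ∀ w : V, w ∉ C → ∃ z, G.Adj w z)
    (htf : TwinFree G C)
    (m : ℕ) (hm : m = Fintype.card V - gdelta G C + 1)
    (W : Finset V) (w1 : V) (hw1 : w1 ∈ W)
    (hW : ∀ w ∈ W, gN G C w ⊆ gN G C w1)
    (i : Fin m) (h : i.1 + 1 < m) :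
    IsFacet G C m
      (fun p => (∑ w ∈ W, p.2 (w, ⟨i.1 + 1, h⟩)) -
        ∑ u ∈ gN G C w1, (p.1 (u, i) - p.1 (u, ⟨i.1 + 1, h⟩))) 0 ↔
    ∀ v : V, v ∉ W → ¬ (gN G C v ⊆ gN G C w1) :=
  nested_ineq_facet_iff_general G C hiso m W w1 hw1 hW i h

end LegalSeq
end
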